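/- Let (R, α) be a multiplicative Hom-Lie conformal superalgebra with α surjective and Z(R) = 0. Then QC(R) is a Hom-Lie conformal superalgebra with respect to the commutator bracket (i.e., QC(R) is closed under the commutator) if and only if [QC(R)_λ QC(R)] = 0, i.e., [D₁_μ D₂] = 0 for all D₁, D₂ ∈ QC(R). -/

import Mathlib

noncomputable section

namespace HLCS

open scoped BigOperators

/-- Evaluation at `l : ℂ` of a polynomial (in `λ`) with coefficients in `M`,
encoded as a finitely supported family of coefficients. -/
def pev {M : Type} [AddCommGroup M] [Module ℂ M] (l : ℂ) (p : ℕ →₀ M) : M :=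
  p.sum fun n r => l ^ n • r

/-- Evaluation of a polynomial with coefficients in `M` at an operator `T`
(used for substitutions such as `-λ - ∂`). -/
def pevOp {M : Type} [AddCommGroup M] [Module ℂ M] (T : Module.End ℂ M) (p : ℕ →₀ M) : M :=
  p.sum fun n r => (T ^ n) r

/-- The super sign `(-1)^{|a||b|}` attached to parities `i`, `j`. -/
def sg (i j : ZMod 2) : ℂ := (-1 : ℂ) ^ (i * j).val

/-- The data of a `ℤ₂`-graded `ℂ[∂]`-module `R` with an endomorphism `α` and a
`ℂ`-bilinear `λ`-bracket with values in `ℂ[λ] ⊗ R` (encoded by its coefficients). -/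
structure Data (R : Type) [AddCommGroup R] [Module ℂ R] where
  der : Module.End ℂ R
  alpha : Module.End ℂ R
  G : ZMod 2 → Submodule ℂ R
  br : R →ₗ[ℂ] R →ₗ[ℂ] (ℕ →₀ R)

namespace Data

variable {R : Type} [AddCommGroup R] [Module ℂ R] (S : Data R)

/-- `[a_λ b]` evaluated at `λ = l`. -/
def lb (l : ℂ) (a b : R) : R := pev l (S.br a b)

/-- `[a_{-l-∂} b]` : the bracket with `-l - ∂` substituted for `λ`. -/
def lbOp (l : ℂ) (a b : R) : R :=
  pevOp ((-l) • (1 : Module.End ℂ R) - S.der) (S.br a b)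

/-- Multiplicativity: `α [a_λ b] = [α(a)_λ α(b)]`. -/
def Mult : Prop := ∀ (l : ℂ) (a b : R), S.alpha (S.lb l a b) = S.lb l (S.alpha a) (S.alpha b)

end Data

variable {R : Type} [AddCommGroup R] [Module ℂ R]

/-- `(R, α)` with the given data is a Hom-Lie conformal superalgebra.
All polynomial identities in `λ, μ` are stated by evaluating at arbitrary
complex numbers (which is equivalent, `ℂ` being infinite). -/
structure IsHLCS (S : Data R) : Prop where
  internal : DirectSum.IsInternal S.G
  der_even : ∀ i, ∀ a ∈ S.G i, S.der a ∈ S.G i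
  alpha_even : ∀ i, ∀ a ∈ S.G i, S.alpha a ∈ S.G i
  alpha_der : ∀ a, S.alpha (S.der a) = S.der (S.alpha a)
  br_grade : ∀ i j, ∀ a ∈ S.G i, ∀ b ∈ S.G j, ∀ n, S.br a b n ∈ S.G (i + j)
  conf_left : ∀ (l : ℂ) (a b : R), S.lb l (S.der a) b = -l • S.lb l a b
  conf_right : ∀ (l : ℂ) (a b : R), S.lb l a (S.der b) = S.der (S.lb l a b) + l • S.lb l a b
  skew : ∀ i j, ∀ a ∈ S.G i, ∀ b ∈ S.G j, ∀ l : ℂ,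
    S.lb l a b = (-sg i j) • S.lbOp l b a
  jacobi : ∀ i j, ∀ a ∈ S.G i, ∀ b ∈ S.G j, ∀ (c : R) (l m : ℂ),
    S.lb l (S.alpha a) (S.lb m b c) =
      S.lb (l + m) (S.lb l a b) (S.alpha c) + sg i j • S.lb m (S.alpha b) (S.lb l a c)

end HLCS
namespace HLCS

variable {R : Type} [AddCommGroup R] [Module ℂ R]

/-- A homogeneous conformal linear map of parity `d` on `R`, encoded as the family of
its evaluations `F l : R → R` (`l : ℂ`): it is `ℂ`-linear, polynomial in `l`, and
satisfies `F_λ(∂a) = (∂ + λ) F_λ(a)`. -/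
structure IsConfMap (S : Data R) (d : ZMod 2) (F : ℂ → R → R) : Prop where
  map_add : ∀ (l : ℂ) (a b : R), F l (a + b) = F l a + F l b
  map_smul : ∀ (l c : ℂ) (a : R), F l (c • a) = c • F l a
  poly : ∀ a : R, ∃ p : ℕ →₀ R, ∀ l : ℂ, F l a = pev l p
  conf : ∀ (l : ℂ) (a : R), F l (S.der a) = S.der (F l a) + l • F l a
  grade : ∀ i, ∀ a ∈ S.G i, ∀ l : ℂ, F l a ∈ S.G (i + d)

/-- Membership in `Ω`: a homogeneous conformal linear map commuting with `α`. -/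
def InOmega (S : Data R) (d : ZMod 2) (F : ℂ → R → R) : Prop :=
  IsConfMap S d F ∧ ∀ (l : ℂ) (a : R), F l (S.alpha a) = S.alpha (F l a)

/-- An `α^k`-derivation of parity `d`. -/
def IsDer (S : Data R) (k : ℕ) (d : ZMod 2) (F : ℂ → R → R) : Prop :=
  InOmega S d F ∧ ∀ i, ∀ a ∈ S.G i, ∀ (b : R) (l m : ℂ),
    F l (S.lb m a b) =
      S.lb (l + m) (F l a) ((S.alpha ^ k) b) +
        ((-1 : ℂ) ^ ((i * d).val)) • S.lb m ((S.alpha ^ k) a) (F l b)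

/-- The commutator `[D_λ D']_μ (a) = D_λ(D'_{μ-λ}(a)) - (-1)^{|D||D'|} D'_{μ-λ}(D_λ(a))`,
with `e = (-1)^{|D||D'|}`; first argument `l` is `λ`, second `m` is `μ`. -/
def brkt (e : ℂ) (F G : ℂ → R → R) : ℂ → ℂ → R → R :=
  fun l m a => F l (G (m - l) a) - e • G (m - l) (F l a)

/-- The twist `α'(D) = D ∘ α`. -/
def tw (S : Data R) (F : ℂ → R → R) : ℂ → R → R := fun l a => F l (S.alpha a)

/-- A generalized `α^k`-derivation of parity `d`. -/
def IsGDer (S : Data R) (k : ℕ) (d : ZMod 2) (F : ℂ → R → R) : Prop :=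
  InOmega S d F ∧ ∃ F' F'' : ℂ → R → R, InOmega S d F' ∧ InOmega S d F'' ∧
    ∀ i, ∀ a ∈ S.G i, ∀ (b : R) (l m : ℂ),
      S.lb (l + m) (F m a) ((S.alpha ^ k) b) +
        ((-1 : ℂ) ^ ((d * i).val)) • S.lb l ((S.alpha ^ k) a) (F' m b) = F'' m (S.lb l a b)

/-- An `α^k`-quasiderivation of parity `d`. -/
def IsQDer (S : Data R) (k : ℕ) (d : ZMod 2) (F : ℂ → R → R) : Prop :=
  InOmega S d F ∧ ∃ F' : ℂ → R → R, InOmega S d F' ∧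
    ∀ i, ∀ a ∈ S.G i, ∀ (b : R) (l m : ℂ),
      S.lb (l + m) (F m a) ((S.alpha ^ k) b) +
        ((-1 : ℂ) ^ ((d * i).val)) • S.lb l ((S.alpha ^ k) a) (F m b) = F' m (S.lb l a b)

/-- An `α^k`-centroid of parity `d`. -/
def IsCent (S : Data R) (k : ℕ) (d : ZMod 2) (F : ℂ → R → R) : Prop :=
  InOmega S d F ∧ ∀ i, ∀ a ∈ S.G i, ∀ (b : R) (l m : ℂ),
    S.lb (l + m) (F m a) ((S.alpha ^ k) b) =
      ((-1 : ℂ) ^ ((d * i).val)) • S.lb l ((S.alpha ^ k) a) (F m b) ∧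
    S.lb (l + m) (F m a) ((S.alpha ^ k) b) = F m (S.lb l a b)

/-- An `α^k`-quasicentroid of parity `d`. -/
def IsQC (S : Data R) (k : ℕ) (d : ZMod 2) (F : ℂ → R → R) : Prop :=
  InOmega S d F ∧ ∀ i, ∀ a ∈ S.G i, ∀ (b : R) (l m : ℂ),
    S.lb (l + m) (F m a) ((S.alpha ^ k) b) =
      ((-1 : ℂ) ^ ((d * i).val)) • S.lb l ((S.alpha ^ k) a) (F m b)

/-- An `α^k`-central derivation of parity `d`. -/
def IsZDer (S : Data R) (k : ℕ) (d : ZMod 2) (F : ℂ → R → R) : Prop :=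
  InOmega S d F ∧ ∀ (a b : R) (l m : ℂ),
    S.lb (l + m) (F m a) ((S.alpha ^ k) b) = 0 ∧ F m (S.lb l a b) = 0

/-- Membership in the center `Z(R)`. -/
def IsCentral (S : Data R) (x : R) : Prop := ∀ (l : ℂ) (y : R), S.lb l x y = 0

end HLCS

/-! Moving `α^{k+s}(b)` across `[F, G]_λ(a)` by the quasicentroid identities of `F` and `G`
(in either order) yields the quasicentroid identity for `[F, G]_λ` with the opposite sign.
So if `[F, G]_λ` is itself a quasicentroid, `[([F, G]_λ a)_μ α^{k+s}(b)] = 0` for all `b`;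
as `α` is surjective, `[F, G]_λ a` is central, hence zero. Conversely, `0` is a quasicentroid. -/

namespace HLCS

variable {R : Type} [AddCommGroup R] [Module ℂ R]

def pevLinearMap (l : ℂ) : (ℕ →₀ R) →ₗ[ℂ] R := Finsupp.lsum ℂ fun n => l ^ n • LinearMap.id

namespace Data

variable (S : Data R)

def lbLinearMap (l : ℂ) : R →ₗ[ℂ] R →ₗ[ℂ] R := S.br.compr₂ (pevLinearMap l)

theorem lbLinearMap_apply (l : ℂ) (a b : R) : S.lbLinearMap l a b = S.lb l a b := rfl

theorem lb_zero_left (l : ℂ) (b : R) : S.lb l 0 b = 0 := by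
  rw [← lbLinearMap_apply, LinearMap.map_zero₂]

theorem lb_zero_right (l : ℂ) (a : R) : S.lb l a 0 = 0 := by
  rw [← lbLinearMap_apply, map_zero]

theorem lb_sub_left (l : ℂ) (a a' b : R) : S.lb l (a - a') b = S.lb l a b - S.lb l a' b := by
  simp only [← lbLinearMap_apply, LinearMap.map_sub₂]

theorem lb_sub_right (l : ℂ) (a b b' : R) : S.lb l a (b - b') = S.lb l a b - S.lb l a b' := by
  simp only [← lbLinearMap_apply, map_sub]

theorem lb_smul_left (l c : ℂ) (a b : R) : S.lb l (c • a) b = c • S.lb l a b := by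
  simp only [← lbLinearMap_apply, LinearMap.map_smul₂]

theorem lb_smul_right (l c : ℂ) (a b : R) : S.lb l a (c • b) = c • S.lb l a b := by
  simp only [← lbLinearMap_apply, map_smul]

end Data

theorem neg_one_pow_val_mul_add_mul (d d' i : ZMod 2) :
    (-1 : ℂ) ^ (d * (i + d')).val * (-1) ^ (d' * i).val =
      (-1) ^ ((d + d') * i).val * (-1) ^ (d * d').val := by
  have h : ∀ x : ZMod 2, x = 0 ∨ x = 1 := by decide
  rcases h d with rfl | rfl <;> rcases h d' with rfl | rfl <;> rcases h i with rfl | rfl <;>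
    norm_num [show (1 + 1 : ZMod 2) = 0 from rfl, show (1 : ZMod 2).val = 1 from rfl]

theorem neg_one_pow_val_mul_mul_add_mul (d d' i : ZMod 2) :
    (-1 : ℂ) ^ (d * d').val * ((-1) ^ (d' * (i + d)).val * (-1) ^ (d * i).val) =
      (-1) ^ ((d + d') * i).val := by
  have h : ∀ x : ZMod 2, x = 0 ∨ x = 1 := by decide
  rcases h d with rfl | rfl <;> rcases h d' with rfl | rfl <;> rcases h i with rfl | rfl <;>
    norm_num [show (1 + 1 : ZMod 2) = 0 from rfl, show (1 : ZMod 2).val = 1 from rfl]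

theorem eq_zero_of_forall_mem_of_iSup_eq_top {ι M N : Type*} [AddCommGroup M] [Module ℂ M]
    [AddCommGroup N] [Module ℂ N] {p : ι → Submodule ℂ M} (hp : iSup p = ⊤) {f : M →ₗ[ℂ] N}
    (hf : ∀ i, ∀ a ∈ p i, f a = 0) : f = 0 :=
  LinearMap.ker_eq_top.mp <| eq_top_iff.mpr <|
    hp ▸ iSup_le fun i a ha => LinearMap.mem_ker.mpr (hf i a ha)

section

variable {S : Data R} {k s : ℕ} {d d' : ZMod 2} {F G : ℂ → R → R}

theorem IsHLCS.alpha_pow_mem (hS : IsHLCS S) {i : ZMod 2} {a : R} (ha : a ∈ S.G i) (n : ℕ) :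
    (S.alpha ^ n) a ∈ S.G i := by
  rw [Module.End.coe_pow]
  exact Set.MapsTo.iterate (hS.alpha_even i) n ha

theorem InOmega.apply_alpha_pow (hF : InOmega S d F) (n : ℕ) (l : ℂ) (a : R) :
    F l ((S.alpha ^ n) a) = (S.alpha ^ n) (F l a) := by
  rw [Module.End.coe_pow]
  exact Function.Commute.iterate_right (hF.2 l) n a

def IsConfMap.toLinearMap (hF : IsConfMap S d F) (l : ℂ) : R →ₗ[ℂ] R where
  toFun := F l
  map_add' := hF.map_add l
  map_smul' := hF.map_smul l

theorem IsConfMap.brkt_eq_zero_of_forall_mem (hint : DirectSum.IsInternal S.G)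
    (hF : IsConfMap S d F) (hG : IsConfMap S d' G) {e l m : ℂ}
    (h : ∀ i, ∀ a ∈ S.G i, brkt e F G l m a = 0) (a : R) :
    brkt e F G l m a = 0 := by
  have hlin : hF.toLinearMap l ∘ₗ hG.toLinearMap (m - l) -
      e • hG.toLinearMap (m - l) ∘ₗ hF.toLinearMap l = 0 :=
    eq_zero_of_forall_mem_of_iSup_eq_top hint.submodule_iSup_eq_top h
  exact congr($hlin a)

theorem isQC_zero (S : Data R) (k : ℕ) (d : ZMod 2) : IsQC S k d fun _ _ => 0 :=
  ⟨⟨⟨fun _ _ _ => (add_zero 0).symm, fun _ c _ => (smul_zero c).symm,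
    fun _ => ⟨0, fun _ => Finsupp.sum_zero_index.symm⟩,
    fun _ _ => by rw [map_zero, smul_zero, add_zero],
    fun _ _ _ _ => zero_mem _⟩, fun _ _ => (map_zero _).symm⟩,
    fun _ _ _ _ _ _ => by rw [S.lb_zero_left, S.lb_zero_right, smul_zero]⟩

theorem IsQC.lb_apply_apply (hS : IsHLCS S) (hF : IsQC S k d F) (hG : IsQC S s d' G)
    {i : ZMod 2} {a : R} (ha : a ∈ S.G i) (b : R) (p q r : ℂ) :
    S.lb (r + q + p) (F p (G q a)) ((S.alpha ^ (k + s)) b) =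
      ((-1 : ℂ) ^ (d * (i + d')).val * (-1) ^ (d' * i).val) •
        S.lb r ((S.alpha ^ (k + s)) a) (G q (F p b)) := by
  rw [pow_add, Module.End.mul_apply, hF.2 (i + d') _ (hG.1.1.grade i a ha q) _ (r + q) p,
    hF.1.apply_alpha_pow, ← hG.1.apply_alpha_pow, hG.2 i _ (hS.alpha_pow_mem ha k) _ r q,
    ← Module.End.mul_apply, pow_mul_comm S.alpha s k, smul_smul]

theorem IsQC.lb_brkt_apply (hS : IsHLCS S) (hF : IsQC S k d F) (hG : IsQC S s d' G)
    {i : ZMod 2} {a : R} (ha : a ∈ S.G i) (b : R) (l m r : ℂ) :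
    S.lb (r + m) (brkt ((-1) ^ (d * d').val) F G l m a) ((S.alpha ^ (k + s)) b) =
      -((-1 : ℂ) ^ ((d + d') * i).val •
        S.lb r ((S.alpha ^ (k + s)) a) (brkt ((-1) ^ (d * d').val) F G l m b)) := by
  have hFG := hF.lb_apply_apply hS hG ha b l (m - l) r
  have hGF := hG.lb_apply_apply hS hF ha b (m - l) l r
  rw [add_assoc, sub_add_cancel] at hFG
  rw [add_comm s k, add_assoc, add_sub_cancel] at hGF
  rw [brkt, brkt, S.lb_sub_left, S.lb_smul_left, hFG, hGF, S.lb_sub_right, S.lb_smul_right,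
    smul_smul, neg_one_pow_val_mul_add_mul, neg_one_pow_val_mul_mul_add_mul]
  module

theorem brkt_apply_eq_zero_of_isQC (hS : IsHLCS S) (hsurj : Function.Surjective S.alpha)
    (hZ : ∀ x : R, IsCentral S x → x = 0) (hF : IsQC S k d F) (hG : IsQC S s d' G) {l : ℂ}
    (hFG : IsQC S (k + s) (d + d') (brkt ((-1) ^ (d * d').val) F G l)) {i : ZMod 2} {a : R}
    (ha : a ∈ S.G i) (m : ℂ) : brkt ((-1) ^ (d * d').val) F G l m a = 0 := by
  refine hZ _ fun p y => ?_
  obtain ⟨b, rfl⟩ : ∃ b, (S.alpha ^ (k + s)) b = y := by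
    rw [Module.End.coe_pow]
    exact hsurj.iterate _ y
  have hpos := hFG.2 i a ha b (p - m) m
  have hneg := hF.lb_brkt_apply hS hG ha b l m (p - m)
  rw [sub_add_cancel] at hpos hneg
  have := IsAddTorsionFree.of_isTorsionFree ℂ R
  exact hpos.trans (self_eq_neg.mp (hpos.symm.trans hneg))

end

theorem qc_homLie_iff_trivial_general (S : Data R) (hS : IsHLCS S)
    (hsurj : Function.Surjective S.alpha)
    (hZ : ∀ x : R, IsCentral S x → x = 0) :
    (∀ (k s : ℕ) (d d' : ZMod 2) (F G : ℂ → R → R),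
        IsQC S k d F → IsQC S s d' G →
          ∀ l : ℂ, IsQC S (k + s) (d + d') (brkt ((-1 : ℂ) ^ ((d * d').val)) F G l)) ↔
      (∀ (k s : ℕ) (d d' : ZMod 2) (F G : ℂ → R → R),
        IsQC S k d F → IsQC S s d' G →
          ∀ (l m : ℂ) (a : R), brkt ((-1 : ℂ) ^ ((d * d').val)) F G l m a = 0) := by
  refine ⟨fun hclosed k s d d' F G hF hG l m => ?_, fun htrivial k s d d' F G hF hG l => ?_⟩
  · exact hF.1.1.brkt_eq_zero_of_forall_mem hS.internal hG.1.1 fun i a ha =>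
      brkt_apply_eq_zero_of_isQC hS hsurj hZ hF hG (hclosed k s d d' F G hF hG l) ha m
  · rw [show brkt _ F G l = fun _ _ => 0 from funext₂ (htrivial k s d d' F G hF hG l)]
    exact isQC_zero S (k + s) (d + d')

/-- Let `(R, α)` be a multiplicative Hom-Lie conformal superalgebra
with `α` surjective and `Z(R) = 0`.  Then `QC(R)` is closed under the commutator
bracket (i.e. it is a Hom-Lie conformal superalgebra for this bracket) if and only
if `[QC(R)_λ QC(R)] = 0`. -/
theorem qc_homLie_iff_trivial (S : Data R) (hS : IsHLCS S) (hmult : S.Mult)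
    (hsurj : Function.Surjective S.alpha)
    (hZ : ∀ x : R, IsCentral S x → x = 0) :
    (∀ (k s : ℕ) (d d' : ZMod 2) (F G : ℂ → R → R),
        IsQC S k d F → IsQC S s d' G →
          ∀ l : ℂ, IsQC S (k + s) (d + d') (brkt ((-1 : ℂ) ^ ((d * d').val)) F G l)) ↔
      (∀ (k s : ℕ) (d d' : ZMod 2) (F G : ℂ → R → R),
        IsQC S k d F → IsQC S s d' G →
          ∀ (l m : ℂ) (a : R), brkt ((-1 : ℂ) ^ ((d * d').val)) F G l m a = 0) :=
  qc_homLie_iff_trivial_general S hS hsurj hZ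

end HLCS
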